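/- arXiv:2004.07357 — 3 statements merged into one kernel-verified Lean document; each statement's English description precedes it below -/
import Mathlib

section
/- Let m ≥ 2 and let x_j = Q^[j](2^m + 3) for j ≥ 0. Then x_j is odd for every j with 0 ≤ j ≤ m − 1, x_m is even, and the chain is strictly increasing: x₀ < x₁ < ⋯ < x_{m−1} < x_m. In particular, orbits of Q contain strictly increasing chains of odd numbers of arbitrary length. -/
/-- The divide-or-choose-2 rule: `Q n = n / 2` if `n` is even,
`Q n = n * (n - 1) / 2` (i.e. `n` choose 2) if `n` is odd. -/
def Q (n : ℕ) : ℕ := if Even n then n / 2 else n * (n - 1) / 2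

lemma Q_odd {n : ℕ} (hn : Odd n) : Q n = n * ((n - 1) / 2) := by
  have h2 : 2 ∣ n - 1 := by
    obtain ⟨k, hk⟩ := hn; omega
  obtain ⟨M, hM⟩ := h2
  simp only [Q, if_neg (Nat.not_even_iff_odd.mpr hn)]
  rw [hM]
  rw [Nat.mul_div_assoc _ ⟨M, rfl⟩, Nat.mul_div_cancel_left _ (by norm_num)]

lemma Q_step (k n : ℕ) (h : n % 2 ^ (k + 4) = 2 ^ (k + 2) + 3) :
    Q n % 2 ^ (k + 3) = 2 ^ (k + 1) + 3 := by
  have hodd : Odd n := by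
    rw [Nat.odd_iff]
    have := Nat.mod_mod_of_dvd n (dvd_pow_self 2 (by omega : k + 4 ≠ 0))
    rw [h] at this
    rw [← this, Nat.add_mod, Nat.pow_mod]
    norm_num
  obtain ⟨a, hn⟩ : ∃ a, n = 2 ^ (k + 4) * a + (2 ^ (k + 2) + 3) :=
    ⟨n / 2 ^ (k + 4), by rw [← h]; exact (Nat.div_add_mod n _).symm⟩
  have hM : (n - 1) / 2 = 2 ^ (k + 3) * a + (2 ^ (k + 1) + 1) := by
    have e1 : 2 ^ (k + 4) * a = 2 * (2 ^ (k + 3) * a) := by ring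
    have e2 : (2:ℕ) ^ (k + 2) = 2 * 2 ^ (k + 1) := by ring
    have : n - 1 = 2 * (2 ^ (k + 3) * a + (2 ^ (k + 1) + 1)) := by omega
    rw [this, Nat.mul_div_cancel_left _ (by norm_num)]
  rw [Q_odd hodd, hM, hn]
  have key : (2 ^ (k + 4) * a + (2 ^ (k + 2) + 3)) * (2 ^ (k + 3) * a + (2 ^ (k + 1) + 1))
      = 2 ^ (k + 3) * (2 ^ (k + 4) * a ^ 2 + 2 ^ (k + 3) * a + 2 ^ k + 5 * a + 1)
        + (2 ^ (k + 1) + 3) := by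
    ring
  rw [key, Nat.add_mod, Nat.mul_mod_right, Nat.zero_add, Nat.mod_mod_of_dvd _ dvd_rfl,
    Nat.mod_eq_of_lt]
  have h1 : 2 ^ (k + 1) < 2 ^ (k + 3) := by
    apply Nat.pow_lt_pow_right <;> omega
  have h2 : (2 : ℕ) ^ 1 ≤ 2 ^ (k + 1) := Nat.pow_le_pow_right (by norm_num) (by omega)
  have h3 : 2 ^ (k + 3) = 4 * 2 ^ (k + 1) := by ring
  norm_num at h2
  rw [h3]
  omega

lemma Q_even_of_mod8 {n : ℕ} (h : n % 8 = 5) : Even (Q n) := by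
  have hodd : Odd n := by rw [Nat.odd_iff]; omega
  rw [Q_odd hodd]
  have he : Even ((n - 1) / 2) := by rw [Nat.even_iff]; omega
  exact he.mul_left n

lemma Q_gt {n : ℕ} (hodd : Odd n) (h5 : 5 ≤ n) : n < Q n := by
  rw [Q_odd hodd]
  have : 2 ≤ (n - 1) / 2 := by omega
  have h1 : 2 ≤ (n - 1) / 2 := by omega
  calc n < n * 2 := by omega
  _ ≤ n * ((n - 1) / 2) := Nat.mul_le_mul_left n h1

theorem stmt_8 (m : ℕ) (hm : 2 ≤ m) (x : ℕ → ℕ) (hx : ∀ j, x j = Q^[j] (2 ^ m + 3)) :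
    (∀ j ≤ m - 1, Odd (x j)) ∧ Even (x m) ∧ (∀ j < m, x j < x (j + 1)) := by
  have key : ∀ j, j ≤ m - 1 → x j % 2 ^ (m - j + 2) = 2 ^ (m - j) + 3 := by
    intro j
    induction j with
    | zero =>
      intro _
      rw [hx 0]
      simp only [Function.iterate_zero, id, Nat.sub_zero]
      apply Nat.mod_eq_of_lt
      have : 2 ^ (m + 2) = 4 * 2 ^ m := by ring
      have h1 : (2:ℕ) ^ 1 ≤ 2 ^ m := Nat.pow_le_pow_right (by norm_num) (by omega)
      norm_num at h1
      rw [this]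
      omega
    | succ j ih =>
      intro hj
      have hj' : j ≤ m - 1 := by omega
      have := ih hj'
      have hk : m - j = (m - (j + 1) - 1) + 2 := by omega
      have hstep := Q_step (m - (j + 1) - 1) (x j) (by rw [hk] at this; convert this using 3)
      have hxj : x (j + 1) = Q (x j) := by
        rw [hx (j + 1), hx j, Function.iterate_succ_apply']
      rw [hxj]
      convert hstep using 3 <;> omega
  have hodd : ∀ j ≤ m - 1, Odd (x j) := by
    intro j hj
    have h := key j hj
    rw [Nat.odd_iff]
    have hd := Nat.mod_mod_of_dvd (x j) (dvd_pow_self 2 (by omega : m - j + 2 ≠ 0))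
    rw [h] at hd
    rw [← hd, Nat.add_mod, Nat.pow_mod]
    have : m - j ≠ 0 := by omega
    simp [this]
  have hge5 : ∀ j ≤ m - 1, 5 ≤ x j := by
    intro j hj
    have h := key j hj
    have h1 : 2 ≤ 2 ^ (m - j) := by
      calc (2:ℕ) = 2 ^ 1 := by norm_num
      _ ≤ 2 ^ (m - j) := Nat.pow_le_pow_right (by norm_num) (by omega)
    have := Nat.mod_le (x j) (2 ^ (m - j + 2))
    omega
  refine ⟨hodd, ?_, ?_⟩
  · have h := key (m - 1) (le_refl _)
    have hmj : m - (m - 1) = 1 := by omega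
    rw [hmj] at h
    norm_num at h
    have hiter : ∀ y, Q^[m] y = Q (Q^[m-1] y) := by
      intro y
      conv_lhs => rw [show m = (m-1)+1 from by omega]
      rw [Function.iterate_succ_apply']
    have hxm : x m = Q (x (m - 1)) := by
      rw [hx m, hx (m - 1), hiter]
    rw [hxm]
    exact Q_even_of_mod8 h
  · intro j hj
    have hj' : j ≤ m - 1 := by omega
    have hxj : x (j + 1) = Q (x j) := by
      rw [hx (j + 1), hx j, Function.iterate_succ_apply']
    rw [hxj]
    exact Q_gt (hodd j hj') (hge5 j hj')
end

section
/- For every positive integer m, if x₀ = 2^m − 1 then the orbit of x₀ under S reaches 0 and stays there: S^[n](x₀) = 0 for all n ≥ m(m+1)/2. -/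
/-- The symmetric rule: `S n = n / 2` if `n` is even,
`S n = (n ^ 2 - 1) / 4` if `n` is odd. -/
def S (n : ℕ) : ℕ := if Even n then n / 2 else (n ^ 2 - 1) / 4

lemma S_zero : S 0 = 0 := by simp [S]

lemma iter_zero (k : ℕ) : S^[k] 0 = 0 := by
  induction k with
  | zero => rfl
  | succ k ih => rw [Function.iterate_succ_apply, S_zero, ih]

lemma iter_pow (j t : ℕ) : S^[j] (2 ^ j * t) = t := by
  induction j with
  | zero => simp
  | succ j ih =>
    rw [Function.iterate_succ_apply]
    have he : Even (2 ^ (j + 1) * t) := ⟨2 ^ j * t, by rw [pow_succ]; ring⟩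
    have : S (2 ^ (j + 1) * t) = 2 ^ j * t := by
      simp only [S, if_pos he]
      rw [pow_succ, mul_comm (2 ^ j) 2, mul_assoc, Nat.mul_div_cancel_left _ two_pos]
    rw [this, ih]

lemma S_mersenne (m : ℕ) (hm : 1 ≤ m) :
    S (2 ^ m - 1) = 2 ^ (m - 1) * (2 ^ (m - 1) - 1) := by
  obtain ⟨k, rfl⟩ := Nat.exists_eq_add_of_le hm
  have h1 : 1 ≤ 2 ^ (1 + k) := Nat.one_le_two_pow
  have hodd : ¬ Even (2 ^ (1 + k) - 1) := by
    have : Even (2 ^ (1 + k)) := ⟨2 ^ k, by rw [pow_add]; ring⟩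
    simp [Nat.even_sub h1, this]
  simp only [S, if_neg hodd]
  have hk : 1 + k - 1 = k := by omega
  rw [hk]
  have h2 : 1 ≤ 2 ^ k := Nat.one_le_two_pow
  obtain ⟨b, hb⟩ : ∃ b, 2 ^ k = b + 1 := ⟨2 ^ k - 1, by omega⟩
  have hpk : 2 ^ (1 + k) = 2 * (b + 1) := by rw [pow_add, hb]; ring
  rw [hpk, hb]
  have h3 : 2 * (b + 1) - 1 = 2 * b + 1 := by omega
  rw [h3]
  have h4 : (2 * b + 1) ^ 2 = 4 * (b * b) + 4 * b + 1 := by ring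
  have h5 : (b + 1) * ((b + 1) - 1) = b * b + b := by simp; ring
  omega

lemma iter_mersenne (m : ℕ) (hm : 1 ≤ m) :
    S^[m] (2 ^ m - 1) = 2 ^ (m - 1) - 1 := by
  obtain ⟨k, rfl⟩ := Nat.exists_eq_add_of_le hm
  rw [Nat.add_comm 1 k, Function.iterate_succ_apply, S_mersenne _ (by omega)]
  simp only [Nat.add_sub_cancel]
  exact iter_pow k _

lemma iter_tri (m : ℕ) : S^[m * (m + 1) / 2] (2 ^ m - 1) = 0 := by
  induction m with
  | zero => simp [iter_zero]
  | succ m ih =>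
    have hd : 2 ∣ m * (m + 1) := (Nat.even_mul_succ_self m).two_dvd
    have heq : (m + 1) * (m + 1 + 1) / 2 = m * (m + 1) / 2 + (m + 1) := by
      obtain ⟨c, hc⟩ := hd
      have : (m + 1) * (m + 1 + 1) = m * (m + 1) + 2 * (m + 1) := by ring
      omega
    rw [heq, Function.iterate_add_apply, iter_mersenne (m + 1) (by omega)]
    simpa using ih

theorem stmt_11 (m : ℕ) (hm : 1 ≤ m) :
    ∀ n : ℕ, m * (m + 1) / 2 ≤ n → S^[n] (2 ^ m - 1) = 0 := by
  intro n hn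
  have : n = (n - m * (m + 1) / 2) + m * (m + 1) / 2 := by omega
  rw [this, Function.iterate_add_apply, iter_tri, iter_zero]
end

section
/- The map S has no nontrivial cycles: if x ∈ ℕ satisfies S^[m](x) = x for some m ≥ 1, then x = 0. -/
lemma iterS_zero (j : ℕ) : S^[j] 0 = 0 := Function.iterate_fixed S_zero j

lemma S_even {n : ℕ} (hn : Even n) : S n = n / 2 := by simp [S, hn]

lemma S_two_mul (n : ℕ) : S (2 * n) = n := by
  rw [S_even ⟨n, by ring⟩]; omega

lemma S_odd {n m : ℕ} (hn : Odd n) (h : n ^ 2 = 4 * m + 1) : S n = m := by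
  rw [S, if_neg (by simpa using (Nat.not_even_iff_odd.mpr hn)), h]
  simp

lemma iter_halve (k w : ℕ) : S^[k] (2 ^ k * w) = w := by
  induction k with
  | zero => simp
  | succ k ih =>
    rw [Function.iterate_succ_apply, pow_succ, mul_comm (2^k) 2, mul_assoc,
      S_two_mul, ih]

lemma reach_pow_add (k : ℕ) : ∃ j, S^[j] (2 ^ k + 1) = 0 := by
  induction k with
  | zero =>
    refine ⟨2, ?_⟩
    have h1 : S 2 = 1 := by have := S_two_mul 1; norm_num at this ⊢; exact this
    have h2 : S 1 = 0 := S_odd odd_one (by norm_num)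
    simp [Function.iterate_succ_apply, h1, h2]
  | succ k ih =>
    obtain ⟨j, hj⟩ := ih
    have hodd : Odd (2 ^ (k+1) + 1) := Even.add_one ⟨2^k, by ring⟩
    have hS : S (2 ^ (k+1) + 1) = 2 ^ k * (2 ^ k + 1) := by
      apply S_odd hodd
      rw [pow_succ]; ring
    refine ⟨j + k + 1, ?_⟩
    rw [show j + k + 1 = (j + k) + 1 by ring, Function.iterate_succ_apply, hS,
      Function.iterate_add_apply, iter_halve, hj]

lemma reach_pow_sub (k : ℕ) : ∃ j, S^[j] (2 ^ k - 1) = 0 := by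
  induction k with
  | zero => exact ⟨0, rfl⟩
  | succ k ih =>
    obtain ⟨j, hj⟩ := ih
    have h2k : (1:ℕ) ≤ 2 ^ k := Nat.one_le_two_pow
    have hodd : Odd (2 ^ (k+1) - 1) :=
      Nat.Even.sub_odd (by omega) ⟨2^k, by rw [pow_succ]; ring⟩ odd_one
    have hS : S (2 ^ (k+1) - 1) = 2 ^ k * (2 ^ k - 1) := by
      apply S_odd hodd
      have : (2:ℕ) ^ (k+1) = 2 * 2 ^ k := by rw [pow_succ]; ring
      zify [h2k, show (1:ℕ) ≤ 2^(k+1) by omega]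
      push_cast [this]
      ring
    refine ⟨j + k + 1, ?_⟩
    rw [show j + k + 1 = (j + k) + 1 by ring, Function.iterate_succ_apply, hS,
      Function.iterate_add_apply, iter_halve, hj]

theorem stmt_15 (x m : ℕ) (hm : 1 ≤ m) (h : S^[m] x = x) : x = 0 := by
  revert h
  induction x using Nat.strong_induction_on with
  | _ x IH =>
  intro h
  have hfix : ∀ t, S^[m * t] x = x := by
    intro t
    rw [Function.iterate_mul]
    exact Function.iterate_fixed h t
  have hper : ∀ i, S^[i] x = S^[i % m] x := by
    intro i
    conv_lhs => rw [← Nat.mod_add_div i m]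
    rw [Function.iterate_add_apply, hfix]
  have horb : ∀ i, S^[m] (S^[i] x) = S^[i] x := by
    intro i
    rw [← Function.iterate_add_apply, add_comm, Function.iterate_add_apply, h]
  have hzero : (∃ i, S^[i] x = 0) → x = 0 := by
    rintro ⟨i, hi⟩
    have h1 : x = S^[m * (i+1)] x := (hfix (i+1)).symm
    have hge : i ≤ m * (i+1) := le_trans (Nat.le_succ i) (Nat.le_mul_of_pos_left _ hm)
    have h2 : m * (i+1) = (m * (i+1) - i) + i := by omega
    rw [h2, Function.iterate_add_apply, hi, iterS_zero] at h1
    exact h1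
  by_cases hmin : ∃ i, S^[i] x < x
  · obtain ⟨i, hi⟩ := hmin
    exact hzero ⟨i, IH _ hi (horb i)⟩
  push_neg at hmin
  by_cases hx : x = 0
  · exact hx
  -- there is an odd element in the orbit
  have hoddex : ∃ i, Odd (S^[i] x) := by
    by_contra hall
    push_neg at hall
    have hev : Even x := Nat.not_odd_iff_even.mp (by simpa using hall 0)
    have h1 : S x = x / 2 := S_even hev
    have h2 : x ≤ S^[1] x := hmin 1
    simp only [Function.iterate_one, h1] at h2
    omega
  obtain ⟨i₁, hodd1⟩ := hoddex
  -- max odd element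
  set f : ℕ → ℕ := fun i => if Odd (S^[i] x) then S^[i] x else 0 with hf
  obtain ⟨i₀, hi₀m, hsup⟩ := Finset.exists_mem_eq_sup (Finset.range m)
    ⟨0, Finset.mem_range.mpr hm⟩ f
  have hle1 : f (i₁ % m) ≤ (Finset.range m).sup f :=
    Finset.le_sup (Finset.mem_range.mpr (Nat.mod_lt _ hm))
  have hodd1' : Odd (S^[i₁ % m] x) := by rw [← hper]; exact hodd1
  have hval1 : f (i₁ % m) = S^[i₁ % m] x := if_pos hodd1'
  have hx1 : 1 ≤ x := by omega
  have hge1 : 1 ≤ (Finset.range m).sup f := by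
    rw [hval1] at hle1
    exact le_trans (le_trans hx1 (hmin _)) hle1
  have hoddN : Odd (S^[i₀] x) := by
    by_contra hc
    rw [hsup, hf] at hge1
    simp only [if_neg hc] at hge1
    omega
  set N := S^[i₀] x with hNdef
  have hmax : ∀ j, Odd (S^[j] x) → S^[j] x ≤ N := by
    intro j hj
    have hj' : Odd (S^[j % m] x) := by rwa [hper] at hj
    have : f (j % m) ≤ (Finset.range m).sup f :=
      Finset.le_sup (Finset.mem_range.mpr (Nat.mod_lt _ hm))
    rw [show f (j % m) = S^[j % m] x from if_pos hj'] at this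
    rw [hper j]
    calc S^[j % m] x ≤ (Finset.range m).sup f := this
      _ = N := by rw [hsup]; exact if_pos hoddN
  have hNx : x ≤ N := hmin i₀
  by_cases hN1 : N = 1
  · refine hzero ⟨i₀ + 1, ?_⟩
    rw [Function.iterate_succ_apply', ← hNdef, hN1]
    exact S_odd odd_one (by norm_num)
  have hN2 : N % 2 = 1 := Nat.odd_iff.mp hoddN
  have hN3 : 3 ≤ N := by omega
  obtain ⟨a, u, hu2, hu⟩ := Nat.exists_eq_pow_mul_and_not_dvd
    (show N - 1 ≠ 0 by omega) 2 (by norm_num)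
  obtain ⟨b, v, hv2, hv⟩ := Nat.exists_eq_pow_mul_and_not_dvd
    (show N + 1 ≠ 0 by omega) 2 (by norm_num)
  have huodd : u % 2 = 1 := Nat.two_dvd_ne_zero.mp hu2
  have hvodd : v % 2 = 1 := Nat.two_dvd_ne_zero.mp hv2
  have ha1 : 1 ≤ a := by
    by_contra hc
    push_neg at hc
    interval_cases a
    simp at hu
    omega
  have hb1 : 1 ≤ b := by
    by_contra hc
    push_neg at hc
    interval_cases b
    simp at hv
    omega
  -- S N = 2^(a+b-2) * (u*v)
  have hab2 : a + b - 2 + 2 = a + b := by omega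
  have hkey : N ^ 2 = 4 * (2 ^ (a + b - 2) * (u * v)) + 1 := by
    have hNsq : N ^ 2 = (N - 1) * (N + 1) + 1 := by
      obtain ⟨c, hc⟩ : ∃ c, N = c + 1 := ⟨N - 1, by omega⟩
      rw [hc]
      simp only [Nat.add_sub_cancel]
      ring
    rw [hNsq, hu, hv]
    obtain ⟨c, hcc⟩ : ∃ c, a + b - 2 = c := ⟨_, rfl⟩
    have h4 : (2:ℕ) ^ a * 2 ^ b = 4 * 2 ^ (a + b - 2) := by
      have hab : a + b = c + 2 := by omega
      rw [hcc, ← pow_add, hab, pow_add]; ring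
    have hre : (2:ℕ) ^ a * u * (2 ^ b * v) = (2 ^ a * 2 ^ b) * (u * v) := by ring
    rw [hre, h4]; ring
  have hSN : S N = 2 ^ (a + b - 2) * (u * v) := S_odd hoddN hkey
  have horbuv : S^[(a + b - 2) + (i₀ + 1)] x = u * v := by
    rw [Function.iterate_add_apply, Function.iterate_succ_apply', ← hNdef, hSN,
      iter_halve]
  have huv : Odd (u * v) := (Nat.odd_iff.mpr huodd).mul (Nat.odd_iff.mpr hvodd)
  have huvN : u * v ≤ N := by
    have := hmax ((a + b - 2) + (i₀ + 1)) (by rw [horbuv]; exact huv)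
    rwa [horbuv] at this
  -- finishing: N is 2^a+1 or 2^b-1
  have hfinish : ∀ j, S^[j] N = 0 → x = 0 := by
    intro j hj
    exact hzero ⟨j + i₀, by rw [Function.iterate_add_apply, ← hNdef, hj]⟩
  have hN4 : N % 4 = 1 ∨ N % 4 = 3 := by omega
  rcases hN4 with h4 | h4
  · -- N + 1 ≡ 2 mod 4, so b = 1, v = (N+1)/2, u = 1, N = 2^a + 1
    have hbeq : b = 1 := by
      by_contra hb
      have hb2 : 2 ≤ b := by omega
      have : (4:ℕ) ∣ N + 1 := by
        rw [hv]
        exact Dvd.dvd.mul_right (by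
          have : (2:ℕ)^2 ∣ 2^b := pow_dvd_pow 2 hb2
          simpa using this) v
      omega
    rw [hbeq, pow_one] at hv
    have hu1 : u = 1 := by
      by_contra hc
      have hu3 : 3 ≤ u := by omega
      have : 3 * v ≤ u * v := Nat.mul_le_mul_right v hu3
      omega
    rw [hu1, mul_one] at hu
    have hNa : N = 2 ^ a + 1 := by omega
    obtain ⟨j, hj⟩ := reach_pow_add a
    exact hfinish j (by rw [hNa]; exact hj)
  · -- N - 1 ≡ 2 mod 4, so a = 1, u = (N-1)/2
    have haeq : a = 1 := by
      by_contra hb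
      have ha2 : 2 ≤ a := by omega
      have : (4:ℕ) ∣ N - 1 := by
        rw [hu]
        exact Dvd.dvd.mul_right (by
          have : (2:ℕ)^2 ∣ 2^a := pow_dvd_pow 2 ha2
          simpa using this) u
      omega
    rw [haeq, pow_one] at hu
    by_cases hv1 : v = 1
    · rw [hv1, mul_one] at hv
      have hNb : N = 2 ^ b - 1 := by omega
      obtain ⟨j, hj⟩ := reach_pow_sub b
      exact hfinish j (by rw [hNb]; exact hj)
    · -- v ≥ 3 forces N = 3 = 2^2 - 1
      have hv3 : 3 ≤ v := by omega
      have : 3 * u ≤ u * v := by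
        calc 3 * u = u * 3 := by ring
          _ ≤ u * v := Nat.mul_le_mul_left u hv3
      have hNeq3 : N = 3 := by omega
      obtain ⟨j, hj⟩ := reach_pow_sub 2
      exact hfinish j (by rw [hNeq3]; exact hj)
end
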